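/- There exists a constant λ₁ ≥ 0 such that for every smooth periodic mean-zero field U = (v, T) on 𝕋³ with ∫_{−1}^1 ∇_H·v dz = 0, the coercivity inequality ⟨−ΔU + B(U, U) + G(U), U⟩_{L²} ≥ (1/2) ‖U‖_{W^{1,2}}² − λ₁ (1 + |U|_{L²}²) holds; in particular (B(U,U), U)_{L²} = 0 and |(G(U), U)_{L²}| ≤ C |U|_{L²} ‖U‖_{W^{1,2}}. -/

import Mathlib

open MeasureTheory Real

noncomputable section

/-- Points of `ℝ³`; the torus `𝕋³ = 𝕋² × (−1,1)` is modelled by periodic functions on `ℝ³`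
with periods `1, 1, 2`. -/
abbrev Pt : Type := ℝ × ℝ × ℝ

/-- A fundamental domain for the torus `𝕋³ = 𝕋² × (−1,1)`. -/
def D3 : Set Pt := Set.Icc (0:ℝ) 1 ×ˢ Set.Icc (0:ℝ) 1 ×ˢ Set.Icc (-1:ℝ) 1

/-- The (restriction of the) volume measure on the torus. -/
def μ3 : Measure Pt := volume.restrict D3

/-- Periodicity in `x, y` (period 1) and in `z` (period 2). -/
def Periodic3 (f : Pt → ℝ) : Prop :=
  (∀ x y z : ℝ, f (x + 1, y, z) = f (x, y, z)) ∧
  (∀ x y z : ℝ, f (x, y + 1, z) = f (x, y, z)) ∧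
  (∀ x y z : ℝ, f (x, y, z + 2) = f (x, y, z))

/-- Partial derivatives. -/
def dX (f : Pt → ℝ) (p : Pt) : ℝ := fderiv ℝ f p (1, 0, 0)
def dY (f : Pt → ℝ) (p : Pt) : ℝ := fderiv ℝ f p (0, 1, 0)
def dZ (f : Pt → ℝ) (p : Pt) : ℝ := fderiv ℝ f p (0, 0, 1)

/-- A smooth periodic function on the torus. -/
def Smooth3 (f : Pt → ℝ) : Prop := ContDiff ℝ (⊤ : ℕ∞) f ∧ Periodic3 f

/-- Mean zero over the torus. -/
def MeanZero3 (f : Pt → ℝ) : Prop := (∫ p in D3, f p) = 0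

/-- A horizontal vector field `v = (v¹, v²)`. -/
abbrev VF : Type := (Pt → ℝ) × (Pt → ℝ)

def SmoothV (v : VF) : Prop := Smooth3 v.1 ∧ Smooth3 v.2
def MeanZeroV (v : VF) : Prop := MeanZero3 v.1 ∧ MeanZero3 v.2

/-- Horizontal divergence `∇_H · v`. -/
def divH (v : VF) (p : Pt) : ℝ := dX v.1 p + dY v.2 p

/-- The constraint `∫_{−1}^1 ∇_H · v dz = 0`. -/
def DivFreeV (v : VF) : Prop := ∀ x y : ℝ, (∫ t in (-1:ℝ)..1, divH v (x, y, t)) = 0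

/-- `Φ(v)(x,y,z) = − ∫_{−1}^z ∇_H · v(x,y,z′) dz′`. -/
def Phi (v : VF) (p : Pt) : ℝ := -∫ t in (-1:ℝ)..p.2.2, divH v (p.1, p.2.1, t)

/-- The advection `(v · ∇_H) f`. -/
def advH (v : VF) (f : Pt → ℝ) (p : Pt) : ℝ := v.1 p * dX f p + v.2 p * dY f p

/-- `L²(𝕋³)` norm. -/
def L2 (f : Pt → ℝ) : ℝ := Real.sqrt (∫ p in D3, (f p) ^ 2)

def L2V (v : VF) : ℝ := Real.sqrt (∫ p in D3, ((v.1 p) ^ 2 + (v.2 p) ^ 2))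

def gradHsq (f : Pt → ℝ) (p : Pt) : ℝ := (dX f p) ^ 2 + (dY f p) ^ 2
def gradSq (f : Pt → ℝ) (p : Pt) : ℝ := (dX f p) ^ 2 + (dY f p) ^ 2 + (dZ f p) ^ 2

/-- `L²` norm of the horizontal gradient of a horizontal vector field. -/
def L2gradHV (v : VF) : ℝ := Real.sqrt (∫ p in D3, (gradHsq v.1 p + gradHsq v.2 p))

/-- `L²` norm of the full gradient of a horizontal vector field. -/
def L2gradV (v : VF) : ℝ := Real.sqrt (∫ p in D3, (gradSq v.1 p + gradSq v.2 p))

/-- `L²` norm of `∂_z v`. -/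
def L2dzV (v : VF) : ℝ := Real.sqrt (∫ p in D3, ((dZ v.1 p) ^ 2 + (dZ v.2 p) ^ 2))

/-- `L²` norm of `∇_H ∂_z v`. -/
def L2gradHdzV (v : VF) : ℝ :=
  Real.sqrt (∫ p in D3, (gradHsq (dZ v.1) p + gradHsq (dZ v.2) p))

/-- A field `U = (v, T)` consisting of a horizontal vector field and a scalar. -/
abbrev Fld : Type := VF × (Pt → ℝ)

def SmoothF (U : Fld) : Prop := SmoothV U.1 ∧ Smooth3 U.2
def MeanZeroF (U : Fld) : Prop := MeanZeroV U.1 ∧ MeanZero3 U.2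

def L2F (U : Fld) : ℝ :=
  Real.sqrt (∫ p in D3, ((U.1.1 p) ^ 2 + (U.1.2 p) ^ 2 + (U.2 p) ^ 2))

/-- `W^{1,2}(𝕋³)` norm of a field. -/
def W12F (U : Fld) : ℝ :=
  Real.sqrt (∫ p in D3,
    ((U.1.1 p) ^ 2 + (U.1.2 p) ^ 2 + (U.2 p) ^ 2 +
      gradSq U.1.1 p + gradSq U.1.2 p + gradSq U.2 p))

/-- `H³(𝕋³)` norm of a scalar function. -/
def H3 (f : Pt → ℝ) : ℝ :=
  Real.sqrt (∫ p in D3, ∑ k ∈ Finset.range 4, ‖iteratedFDeriv ℝ k f p‖ ^ 2)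

def H3F (U : Fld) : ℝ := Real.sqrt ((H3 U.1.1) ^ 2 + (H3 U.1.2) ^ 2 + (H3 U.2) ^ 2)

/-- `L²` pairing of two fields. -/
def pairF (U W : Fld) : ℝ :=
  ∫ p in D3, (U.1.1 p * W.1.1 p + U.1.2 p * W.1.2 p + U.2 p * W.2 p)

def subF (U W : Fld) : Fld :=
  ((fun p => U.1.1 p - W.1.1 p, fun p => U.1.2 p - W.1.2 p), fun p => U.2 p - W.2 p)

/-- Three-dimensional Laplacian. -/
def lap (f : Pt → ℝ) : Pt → ℝ := fun p => dX (dX f) p + dY (dY f) p + dZ (dZ f) p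

def lapF (U : Fld) : Fld := ((lap U.1.1, lap U.1.2), lap U.2)

/-- The nonlinearity `B(U, U₁)` of the primitive equations. -/
def BF (U U₁ : Fld) : Fld :=
  ((fun p => advH U.1 U₁.1.1 p + Phi U.1 p * dZ U₁.1.1 p,
    fun p => advH U.1 U₁.1.2 p + Phi U.1 p * dZ U₁.1.2 p),
   fun p => advH U.1 U₁.2 p + Phi U.1 p * dZ U₁.2 p)

/-- `G(U) = (f k × v − ∫_{−1}^z ∇_H T dz′, Φ(v))` with Coriolis parameter `fc`. -/
def GF (fc : ℝ) (U : Fld) : Fld :=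
  ((fun p => -fc * U.1.2 p - ∫ t in (-1:ℝ)..p.2.2, dX U.2 (p.1, p.2.1, t),
    fun p => fc * U.1.1 p - ∫ t in (-1:ℝ)..p.2.2, dY U.2 (p.1, p.2.1, t)),
   fun p => Phi U.1 p)

/-! ### Fourier analysis on the torus: the operator `Λ^s = (−Δ)^{s/2}` -/

/-- Euclidean norm of the frequency attached to `k ∈ ℤ³` (periods `1,1,2`). -/
def freqNorm (k : ℤ × ℤ × ℤ) : ℝ :=
  Real.sqrt ((2 * π * (k.1 : ℝ)) ^ 2 + (2 * π * (k.2.1 : ℝ)) ^ 2 + (π * (k.2.2 : ℝ)) ^ 2)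

/-- The character `e^{i (2π k₁ x + 2π k₂ y + π k₃ z)}`. -/
def chr (k : ℤ × ℤ × ℤ) (p : Pt) : ℂ :=
  Complex.exp (Complex.I *
    (2 * π * (k.1 : ℝ) * p.1 + 2 * π * (k.2.1 : ℝ) * p.2.1 + π * (k.2.2 : ℝ) * p.2.2))

/-- Fourier coefficient of `f` (the volume of the fundamental domain is `2`). -/
def fCoeff (f : Pt → ℝ) (k : ℤ × ℤ × ℤ) : ℂ :=
  (1 / 2 : ℂ) * ∫ p in D3, (f p : ℂ) * chr (-k) p

/-- `Λ^s f = (−Δ)^{s/2} f`, defined via Fourier series (on mean-zero functions). -/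
def Lam (s : ℝ) (f : Pt → ℝ) (p : Pt) : ℝ :=
  (∑' k : ℤ × ℤ × ℤ, ((freqNorm k ^ s : ℝ) : ℂ) * fCoeff f k * chr k p).re

/-- `|Λ^s f|_{L²(𝕋³)}`. -/
def LamL2 (s : ℝ) (f : Pt → ℝ) : ℝ := Real.sqrt (∫ p in D3, (Lam s f p) ^ 2)

/-- `|Λ^s v|_{L²(𝕋³)}` for a horizontal vector field. -/
def LamL2V (s : ℝ) (v : VF) : ℝ := Real.sqrt ((LamL2 s v.1) ^ 2 + (LamL2 s v.2) ^ 2)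


/-- The full drift `−ΔU + B(U,U) + G(U)` of the primitive equations. -/
def PEop (fc : ℝ) (U : Fld) : Fld :=
  ((fun p => -(lap U.1.1 p) + (BF U U).1.1 p + (GF fc U).1.1 p,
    fun p => -(lap U.1.2 p) + (BF U U).1.2 p + (GF fc U).1.2 p),
   fun p => -(lap U.2 p) + (BF U U).2 p + (GF fc U).2 p)


/-!
Integration by parts on the torus gives `−(ΔU, U) = |∇U|²`. The nonlinearity `B(U, U)` is
transport by the three-dimensional velocity `(v, Φ(v))`, which is divergence free
(`∂_z Φ(v) = −∇_H · v`) and whose vertical component vanishes at `z = ±1` thanks to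
`∫_{−1}^1 ∇_H · v dz = 0`; hence `(B(U, U), U) = ½ ∫ (v, Φ(v)) · ∇|U|² = 0`. In `(G(U), U)` the
Coriolis terms cancel, and the vertical primitives `∫_{−1}^z h dz′` have `L²` norm at most
`2 |h|_{L²}`, so Cauchy–Schwarz gives `|(G(U), U)| ≤ 8 |U|_{L²} ‖U‖_{W^{1,2}}`. The coercivity
estimate with `λ₁ = 33` is then `½ (‖U‖_{W^{1,2}} − 8 |U|_{L²})² ≥ 0`.
-/

theorem sq_integral_mul_le_mul {α : Type*} [MeasurableSpace α] {μ : Measure α} {f g : α → ℝ}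
    (hf : Integrable (fun a => f a ^ 2) μ) (hg : Integrable (fun a => g a ^ 2) μ)
    (hfg : Integrable (fun a => f a * g a) μ) :
    (∫ a, f a * g a ∂μ) ^ 2 ≤ (∫ a, f a ^ 2 ∂μ) * ∫ a, g a ^ 2 ∂μ := by
  have hquad : ∀ t : ℝ,
      0 ≤ (∫ a, f a ^ 2 ∂μ) * (t * t) + 2 * (∫ a, f a * g a ∂μ) * t + ∫ a, g a ^ 2 ∂μ :=
    fun t => calc
      0 ≤ ∫ a, (f a * t + g a) ^ 2 ∂μ := integral_nonneg fun a => sq_nonneg _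
      _ = ∫ a, (f a ^ 2 * (t * t) + f a * g a * (2 * t) + g a ^ 2) ∂μ :=
          integral_congr_ae (ae_of_all _ fun a => by ring)
      _ = (∫ a, f a ^ 2 * (t * t) ∂μ) + (∫ a, f a * g a * (2 * t) ∂μ) + ∫ a, g a ^ 2 ∂μ := by
          rw [integral_add ((hf.mul_const _).fun_add (hfg.mul_const _)) hg,
            integral_add (hf.mul_const _) (hfg.mul_const _)]
      _ = _ := by rw [integral_mul_const, integral_mul_const]; ring
  have := discrim_le_zero hquad
  rw [discrim] at this
  nlinarith

theorem sq_intervalIntegral_le {g : ℝ → ℝ} (hg : Continuous g) {a b : ℝ} (hab : a ≤ b) :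
    (∫ t in a..b, g t) ^ 2 ≤ (b - a) * ∫ t in a..b, g t ^ 2 := by
  have hone : Integrable (fun _ : ℝ => (1 : ℝ) ^ 2) (volume.restrict (Set.Ioc a b)) :=
    integrableOn_const measure_Ioc_lt_top.ne
  have key := sq_integral_mul_le_mul hone ((hg.pow 2).integrableOn_Ioc)
    ((continuous_const.mul hg).integrableOn_Ioc)
  simpa [intervalIntegral.integral_of_le hab, hab] using key

theorem fderiv_add_const_eq_of_forall {E F : Type*} [NormedAddCommGroup E] [NormedSpace ℝ E]
    [NormedAddCommGroup F] [NormedSpace ℝ F] {f : E → F} {c : E} (h : ∀ p, f (p + c) = f p)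
    (p : E) : fderiv ℝ f (p + c) = fderiv ℝ f p := by
  rw [← fderiv_comp_add_right, funext h]

theorem fderiv_mul_apply {E : Type*} [NormedAddCommGroup E] [NormedSpace ℝ E] {f g : E → ℝ}
    {p : E} (hf : DifferentiableAt ℝ f p) (hg : DifferentiableAt ℝ g p) (w : E) :
    fderiv ℝ (fun q => f q * g q) p w = f p * fderiv ℝ g p w + g p * fderiv ℝ f p w := by
  simp [fderiv_fun_mul hf hg]

theorem integral_Icc_eq_zero_of_hasDerivAt {g g' : ℝ → ℝ} {a b : ℝ} (hab : a ≤ b)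
    (hg : ∀ t, HasDerivAt g (g' t) t) (hg' : Continuous g') (hgab : g b = g a) :
    ∫ t in Set.Icc a b, g' t = 0 := by
  rw [integral_Icc_eq_integral_Ioc, ← intervalIntegral.integral_of_le hab,
    intervalIntegral.integral_eq_sub_of_hasDerivAt (fun t _ => hg t) (hg'.intervalIntegrable a b),
    hgab, sub_self]

theorem Periodic3.fderiv_apply {f : Pt → ℝ} (hf : Periodic3 f) (w : Pt) :
    Periodic3 fun p => fderiv ℝ f p w := by
  obtain ⟨hx, hy, hz⟩ := hf
  refine ⟨fun x y z => ?_, fun x y z => ?_, fun x y z => ?_⟩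
  · have := fderiv_add_const_eq_of_forall (f := f) (c := ((1 : ℝ), (0 : ℝ), (0 : ℝ)))
      (fun ⟨a, b, c⟩ => by simpa using hx a b c) (x, y, z)
    simpa using congrArg (· w) this
  · have := fderiv_add_const_eq_of_forall (f := f) (c := ((0 : ℝ), (1 : ℝ), (0 : ℝ)))
      (fun ⟨a, b, c⟩ => by simpa using hy a b c) (x, y, z)
    simpa using congrArg (· w) this
  · have := fderiv_add_const_eq_of_forall (f := f) (c := ((0 : ℝ), (0 : ℝ), (2 : ℝ)))
      (fun ⟨a, b, c⟩ => by simpa using hz a b c) (x, y, z)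
    simpa using congrArg (· w) this

namespace Smooth3

variable {f g : Pt → ℝ}

theorem continuous (hf : Smooth3 f) : Continuous f := hf.1.continuous

theorem differentiable (hf : Smooth3 f) : Differentiable ℝ f := hf.1.differentiable (by simp)

theorem contDiff_one (hf : Smooth3 f) : ContDiff ℝ 1 f := hf.1.of_le (by exact_mod_cast le_top)

theorem fderiv_apply (hf : Smooth3 f) (w : Pt) : Smooth3 fun p => fderiv ℝ f p w :=
  ⟨(hf.1.fderiv_right (by exact_mod_cast le_top)).clm_apply contDiff_const,
    hf.2.fderiv_apply w⟩

theorem dX (hf : Smooth3 f) : Smooth3 (dX f) := hf.fderiv_apply _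
theorem dY (hf : Smooth3 f) : Smooth3 (dY f) := hf.fderiv_apply _
theorem dZ (hf : Smooth3 f) : Smooth3 (dZ f) := hf.fderiv_apply _

theorem mul (hf : Smooth3 f) (hg : Smooth3 g) : Smooth3 fun p => f p * g p := by
  obtain ⟨hf, hfx, hfy, hfz⟩ := hf
  obtain ⟨hg, hgx, hgy, hgz⟩ := hg
  exact ⟨hf.mul hg, fun x y z => by simp only [hfx, hgx], fun x y z => by simp only [hfy, hgy],
    fun x y z => by simp only [hfz, hgz]⟩

theorem continuous_gradSq (hf : Smooth3 f) : Continuous (gradSq f) :=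
  ((hf.dX.continuous.pow 2).add (hf.dY.continuous.pow 2)).add (hf.dZ.continuous.pow 2)

theorem continuous_lap (hf : Smooth3 f) : Continuous (lap f) :=
  (hf.dX.dX.continuous.add hf.dY.dY.continuous).add hf.dZ.dZ.continuous

end Smooth3

theorem hasDerivAt_slice_x {f : Pt → ℝ} (hf : Differentiable ℝ f) (x y z : ℝ) :
    HasDerivAt (fun t => f (t, y, z)) (dX f (x, y, z)) x :=
  (hf _).hasFDerivAt.comp_hasDerivAt x ((hasDerivAt_id x).prodMk (hasDerivAt_const x (y, z)))

theorem hasDerivAt_slice_y {f : Pt → ℝ} (hf : Differentiable ℝ f) (x y z : ℝ) :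
    HasDerivAt (fun t => f (x, t, z)) (dY f (x, y, z)) y :=
  (hf _).hasFDerivAt.comp_hasDerivAt y
    ((hasDerivAt_const y x).prodMk ((hasDerivAt_id y).prodMk (hasDerivAt_const y z)))

theorem hasDerivAt_slice_z {f : Pt → ℝ} (hf : Differentiable ℝ f) (x y z : ℝ) :
    HasDerivAt (fun t => f (x, y, t)) (dZ f (x, y, z)) z :=
  (hf _).hasFDerivAt.comp_hasDerivAt z
    ((hasDerivAt_const z x).prodMk ((hasDerivAt_const z y).prodMk (hasDerivAt_id z)))

theorem volume_restrict_D3 :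
    volume.restrict D3 = (volume.restrict (Set.Icc (0 : ℝ) 1)).prod
      ((volume.restrict (Set.Icc (0 : ℝ) 1)).prod (volume.restrict (Set.Icc (-1 : ℝ) 1))) := by
  rw [Measure.prod_restrict, Measure.prod_restrict, ← Measure.volume_eq_prod,
    ← Measure.volume_eq_prod]
  rfl

theorem Continuous.integrableOn_D3 {F : Pt → ℝ} (hF : Continuous F) : IntegrableOn F D3 :=
  hF.continuousOn.integrableOn_compact (isCompact_Icc.prod (isCompact_Icc.prod isCompact_Icc))

theorem Continuous.integrable_restrict_prod {F : ℝ × ℝ → ℝ} (hF : Continuous F) {s t : Set ℝ}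
    (hs : IsCompact s) (ht : IsCompact t) :
    Integrable F ((volume.restrict s).prod (volume.restrict t)) := by
  rw [Measure.prod_restrict, ← Measure.volume_eq_prod]
  exact hF.continuousOn.integrableOn_compact (hs.prod ht)

theorem integral_D3_eq_zero_of_slices_x {F : Pt → ℝ} (hF : Continuous F)
    (h : ∀ y z, ∫ x in Set.Icc (0 : ℝ) 1, F (x, y, z) = 0) : ∫ p in D3, F p = 0 := by
  rw [volume_restrict_D3, integral_prod_symm _ (volume_restrict_D3 ▸ hF.integrableOn_D3)]
  simp [h]

theorem integral_D3_eq_zero_of_slices_y {F : Pt → ℝ} (hF : Continuous F)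
    (h : ∀ x z, ∫ y in Set.Icc (0 : ℝ) 1, F (x, y, z) = 0) : ∫ p in D3, F p = 0 := by
  have hslice : ∀ x, ∫ q, F (x, q) ∂((volume.restrict (Set.Icc (0 : ℝ) 1)).prod
      (volume.restrict (Set.Icc (-1 : ℝ) 1))) = 0 := fun x => by
    rw [integral_prod_symm _ (Continuous.integrable_restrict_prod (by fun_prop) isCompact_Icc
      isCompact_Icc)]
    simp [h]
  rw [volume_restrict_D3, integral_prod _ (volume_restrict_D3 ▸ hF.integrableOn_D3)]
  simp [hslice]

theorem integral_D3_eq_zero_of_slices_z {F : Pt → ℝ} (hF : Continuous F)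
    (h : ∀ x y, ∫ z in Set.Icc (-1 : ℝ) 1, F (x, y, z) = 0) : ∫ p in D3, F p = 0 := by
  have hslice : ∀ x, ∫ q, F (x, q) ∂((volume.restrict (Set.Icc (0 : ℝ) 1)).prod
      (volume.restrict (Set.Icc (-1 : ℝ) 1))) = 0 := fun x => by
    rw [integral_prod _ (Continuous.integrable_restrict_prod (by fun_prop) isCompact_Icc
      isCompact_Icc)]
    simp [h]
  rw [volume_restrict_D3, integral_prod _ (volume_restrict_D3 ▸ hF.integrableOn_D3)]
  simp [hslice]

theorem ContDiff.continuous_fderiv_apply_one {f : Pt → ℝ} (hf : ContDiff ℝ 1 f) (w : Pt) :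
    Continuous fun p => fderiv ℝ f p w :=
  (hf.continuous_fderiv one_ne_zero).clm_apply continuous_const

theorem integral_dX_eq_zero {f : Pt → ℝ} (hf : ContDiff ℝ 1 f)
    (hper : ∀ x y z, f (x + 1, y, z) = f (x, y, z)) : ∫ p in D3, dX f p = 0 :=
  integral_D3_eq_zero_of_slices_x (hf.continuous_fderiv_apply_one _) fun y z =>
    integral_Icc_eq_zero_of_hasDerivAt zero_le_one
      (fun t => hasDerivAt_slice_x (hf.differentiable one_ne_zero) t y z)
      ((hf.continuous_fderiv_apply_one _).comp (by fun_prop)) (by simpa using hper 0 y z)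

theorem integral_dY_eq_zero {f : Pt → ℝ} (hf : ContDiff ℝ 1 f)
    (hper : ∀ x y z, f (x, y + 1, z) = f (x, y, z)) : ∫ p in D3, dY f p = 0 :=
  integral_D3_eq_zero_of_slices_y (hf.continuous_fderiv_apply_one _) fun x z =>
    integral_Icc_eq_zero_of_hasDerivAt zero_le_one
      (fun t => hasDerivAt_slice_y (hf.differentiable one_ne_zero) x t z)
      ((hf.continuous_fderiv_apply_one _).comp (by fun_prop)) (by simpa using hper x 0 z)

theorem integral_dZ_eq_zero {f : Pt → ℝ} (hf : ContDiff ℝ 1 f)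
    (hper : ∀ x y z, f (x, y, z + 2) = f (x, y, z)) : ∫ p in D3, dZ f p = 0 :=
  integral_D3_eq_zero_of_slices_z (hf.continuous_fderiv_apply_one _) fun x y =>
    integral_Icc_eq_zero_of_hasDerivAt (by norm_num)
      (fun t => hasDerivAt_slice_z (hf.differentiable one_ne_zero) x y t)
      ((hf.continuous_fderiv_apply_one _).comp (by fun_prop)) (by norm_num [← hper x y (-1)])

theorem integral_divH_eq_zero {w : VF} (hw : SmoothV w) : ∫ p in D3, divH w p = 0 := by
  obtain ⟨h1, h2⟩ := hw
  simp only [divH]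
  rw [integral_add (h1.dX.continuous.integrableOn_D3) (h2.dY.continuous.integrableOn_D3),
    integral_dX_eq_zero h1.contDiff_one h1.2.1, integral_dY_eq_zero h2.contDiff_one h2.2.2.1,
    add_zero]

section ProductRule

variable {f g : Pt → ℝ} {p : Pt}

theorem dX_mul (hf : DifferentiableAt ℝ f p) (hg : DifferentiableAt ℝ g p) :
    dX (fun q => f q * g q) p = f p * dX g p + g p * dX f p := fderiv_mul_apply hf hg _

theorem dY_mul (hf : DifferentiableAt ℝ f p) (hg : DifferentiableAt ℝ g p) :
    dY (fun q => f q * g q) p = f p * dY g p + g p * dY f p := fderiv_mul_apply hf hg _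

theorem dZ_mul (hf : DifferentiableAt ℝ f p) (hg : DifferentiableAt ℝ g p) :
    dZ (fun q => f q * g q) p = f p * dZ g p + g p * dZ f p := fderiv_mul_apply hf hg _

end ProductRule

theorem SmoothV.continuous_divH {w : VF} (hw : SmoothV w) : Continuous (divH w) :=
  hw.1.dX.continuous.add hw.2.dY.continuous

theorem integral_lap_mul_self {u : Pt → ℝ} (hu : Smooth3 u) :
    ∫ p in D3, lap u p * u p = -∫ p in D3, gradSq u p := by
  have hd := hu.differentiable
  have hflux : SmoothV (fun q => dX u q * u q, fun q => dY u q * u q) :=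
    ⟨hu.dX.mul hu, hu.dY.mul hu⟩
  have hvert := hu.dZ.mul hu
  have hpt : ∀ p, lap u p * u p
      = divH (fun q => dX u q * u q, fun q => dY u q * u q) p + dZ (fun q => dZ u q * u q) p
        - gradSq u p := by
    intro p
    rw [divH, dX_mul (hu.dX.differentiable p) (hd p), dY_mul (hu.dY.differentiable p) (hd p),
      dZ_mul (hu.dZ.differentiable p) (hd p), lap, gradSq]
    ring
  rw [integral_congr_ae (ae_of_all _ hpt),
    integral_sub ((hflux.continuous_divH.fun_add hvert.dZ.continuous).integrableOn_D3)
      hu.continuous_gradSq.integrableOn_D3,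
    integral_add hflux.continuous_divH.integrableOn_D3 hvert.dZ.continuous.integrableOn_D3,
    integral_divH_eq_zero hflux, integral_dZ_eq_zero hvert.contDiff_one hvert.2.2.2, zero_add,
    zero_sub]

def primZ (h : Pt → ℝ) (p : Pt) : ℝ := ∫ t in (-1 : ℝ)..p.2.2, h (p.1, p.2.1, t)

theorem continuous_primZ {h : Pt → ℝ} (hh : Continuous h) : Continuous (primZ h) :=
  intervalIntegral.continuous_parametric_intervalIntegral_of_continuous
    (f := fun (p : Pt) (t : ℝ) => h (p.1, p.2.1, t)) (hh.comp (by fun_prop)) (by fun_prop)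

theorem hasDerivAt_primZ_slice {h : Pt → ℝ} (hh : Continuous h) (x y z : ℝ) :
    HasDerivAt (fun t => primZ h (x, y, t)) (h (x, y, z)) z :=
  (Continuous.integral_hasStrictDerivAt (f := fun t => h (x, y, t)) (hh.comp (by fun_prop))
    (-1) z).hasDerivAt

theorem sq_primZ_le {h : Pt → ℝ} (hh : Continuous h) {p : Pt} (hp : p ∈ D3) :
    primZ h p ^ 2 ≤ 2 * primZ (fun q => h q ^ 2) (p.1, p.2.1, 1) := by
  obtain ⟨x, y, z⟩ := p
  obtain ⟨-, -, hz₁, hz₂⟩ := hp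
  have hslice : Continuous fun t => h (x, y, t) := hh.comp (by fun_prop)
  have hmono : ∫ t in (-1 : ℝ)..z, h (x, y, t) ^ 2 ≤ ∫ t in (-1 : ℝ)..1, h (x, y, t) ^ 2 :=
    intervalIntegral.integral_mono_interval le_rfl hz₁ hz₂
      (ae_of_all _ fun t => sq_nonneg _) ((hslice.pow 2).intervalIntegrable _ _)
  have hnonneg : 0 ≤ ∫ t in (-1 : ℝ)..z, h (x, y, t) ^ 2 :=
    intervalIntegral.integral_nonneg hz₁ fun t _ => sq_nonneg _
  have hcs := sq_intervalIntegral_le hslice hz₁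
  simp only [primZ] at hcs ⊢
  nlinarith

theorem integral_sq_primZ_le {h : Pt → ℝ} (hh : Continuous h) :
    ∫ p in D3, primZ h p ^ 2 ≤ 4 * ∫ p in D3, h p ^ 2 := by
  set K : Pt → ℝ := fun p => primZ (fun q => h q ^ 2) (p.1, p.2.1, 1) with hK
  have hKc : Continuous K := (continuous_primZ (hh.pow 2)).comp (by fun_prop)
  -- `K` does not depend on `z`, and the `z`-slices of `D3` have length 2.
  have hfubini : ∫ p in D3, (2 * K p - 4 * h p ^ 2) = 0 := by
    refine integral_D3_eq_zero_of_slices_z (by fun_prop) fun x y => ?_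
    have hvol : volume.real (Set.Icc (-1 : ℝ) 1) = 2 := by simp; norm_num
    rw [integral_sub (by fun_prop : Continuous fun z => 2 * K (x, y, z)).integrableOn_Icc
      (by fun_prop : Continuous fun z => 4 * h (x, y, z) ^ 2).integrableOn_Icc]
    simp only [hK]
    rw [setIntegral_const, hvol, integral_const_mul, integral_Icc_eq_integral_Ioc,
      ← intervalIntegral.integral_of_le (by norm_num)]
    simp only [primZ, smul_eq_mul]
    ring
  calc ∫ p in D3, primZ h p ^ 2 ≤ ∫ p in D3, 2 * K p :=
        setIntegral_mono_on ((continuous_primZ hh).pow 2).integrableOn_D3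
          (continuous_const.mul hKc).integrableOn_D3
          (measurableSet_Icc.prod (measurableSet_Icc.prod measurableSet_Icc))
          fun p hp => sq_primZ_le hh hp
    _ = 4 * ∫ p in D3, h p ^ 2 := by
        rw [← integral_const_mul, ← sub_eq_zero, ← integral_sub
          (by fun_prop : Continuous fun p => 2 * K p).integrableOn_D3
          (by fun_prop : Continuous fun p => 4 * h p ^ 2).integrableOn_D3]
        exact hfubini

theorem abs_integral_mul_le_L2_mul_L2 {f g : Pt → ℝ} (hf : Continuous f) (hg : Continuous g) :
    |∫ p in D3, f p * g p| ≤ L2 f * L2 g := by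
  rw [L2, L2, ← sqrt_mul (integral_nonneg fun p => sq_nonneg _)]
  exact Real.abs_le_sqrt (sq_integral_mul_le_mul (hf.pow 2).integrableOn_D3
    (hg.pow 2).integrableOn_D3 (hf.mul hg).integrableOn_D3)

theorem L2_le_mul_sqrt_integral {f G : Pt → ℝ} {c : ℝ} (hf : Continuous f) (hG : Continuous G)
    (hc : 0 ≤ c) (h : ∀ p, f p ^ 2 ≤ c ^ 2 * G p) : L2 f ≤ c * √(∫ p in D3, G p) := by
  rw [L2, ← sqrt_sq hc, ← sqrt_mul (sq_nonneg c), ← integral_const_mul]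
  exact sqrt_le_sqrt (integral_mono (hf.pow 2).integrableOn_D3
    (continuous_const.mul hG).integrableOn_D3 h)

theorem L2_le_sqrt_integral {f G : Pt → ℝ} (hf : Continuous f) (hG : Continuous G)
    (h : ∀ p, f p ^ 2 ≤ G p) : L2 f ≤ √(∫ p in D3, G p) := by
  simpa using L2_le_mul_sqrt_integral hf hG zero_le_one (by simpa using h)

theorem L2_primZ_le {h : Pt → ℝ} (hh : Continuous h) : L2 (primZ h) ≤ 2 * L2 h := by
  calc L2 (primZ h) ≤ √(4 * ∫ p in D3, h p ^ 2) := sqrt_le_sqrt (integral_sq_primZ_le hh)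
    _ = 2 * L2 h := by
      rw [sqrt_mul (by norm_num), show (4 : ℝ) = 2 ^ 2 by norm_num, sqrt_sq zero_le_two, L2]

theorem SmoothV.continuous_Phi {v : VF} (hv : SmoothV v) : Continuous (Phi v) :=
  (continuous_primZ hv.continuous_divH).neg

theorem integral_Phi_mul_dZ {v : VF} (hv : SmoothV v) (hdiv : DivFreeV v) {g : Pt → ℝ}
    (hg : ContDiff ℝ 1 g) : ∫ p in D3, Phi v p * dZ g p = ∫ p in D3, divH v p * g p := by
  have hgZ : Continuous (dZ g) := hg.continuous_fderiv_apply_one _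
  have hPhi := hv.continuous_Phi
  have hdivH := hv.continuous_divH
  rw [← sub_eq_zero, ← integral_sub (hPhi.fun_mul hgZ).integrableOn_D3
    (hdivH.fun_mul hg.continuous).integrableOn_D3]
  refine integral_D3_eq_zero_of_slices_z (by fun_prop) fun x y =>
    integral_Icc_eq_zero_of_hasDerivAt (g := fun t => Phi v (x, y, t) * g (x, y, t))
      (by norm_num) (fun t => ?_) (by fun_prop) ?_
  · exact ((hasDerivAt_primZ_slice hdivH x y t).neg.mul
      (hasDerivAt_slice_z (hg.differentiable one_ne_zero) x y t)).congr_deriv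
      (by simp only [Pi.neg_apply, Phi, primZ]; ring)
  · simp [Phi, hdiv x y]

-- `(v · ∇_H) f + Φ(v) ∂_z f`: transport by the three-dimensional velocity `(v, Φ(v))`.
def advect (v : VF) (f : Pt → ℝ) (p : Pt) : ℝ := advH v f p + Phi v p * dZ f p

theorem integral_advect_eq_zero {v : VF} (hv : SmoothV v) (hdiv : DivFreeV v) {g : Pt → ℝ}
    (hg : Smooth3 g) : ∫ p in D3, advect v g p = 0 := by
  have hflux : SmoothV (fun q => v.1 q * g q, fun q => v.2 q * g q) := ⟨hv.1.mul hg, hv.2.mul hg⟩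
  have hpt : ∀ p, advect v g p = divH (fun q => v.1 q * g q, fun q => v.2 q * g q) p
      + (Phi v p * dZ g p - divH v p * g p) := by
    intro p
    rw [advect, advH, divH, divH, dX_mul (hv.1.differentiable p) (hg.differentiable p),
      dY_mul (hv.2.differentiable p) (hg.differentiable p)]
    ring
  rw [integral_congr_ae (ae_of_all _ hpt), integral_add hflux.continuous_divH.integrableOn_D3
    ((hv.continuous_Phi.fun_mul hg.dZ.continuous).fun_sub
      (hv.continuous_divH.fun_mul hg.continuous)).integrableOn_D3,
    integral_sub (hv.continuous_Phi.fun_mul hg.dZ.continuous).integrableOn_D3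
      (hv.continuous_divH.fun_mul hg.continuous).integrableOn_D3,
    integral_divH_eq_zero hflux, integral_Phi_mul_dZ hv hdiv hg.contDiff_one, sub_self, add_zero]

theorem integral_advect_mul_self_eq_zero {v : VF} (hv : SmoothV v) (hdiv : DivFreeV v)
    {g : Pt → ℝ} (hg : Smooth3 g) : ∫ p in D3, advect v g p * g p = 0 := by
  have hd := hg.differentiable
  have hpt : ∀ p, advect v (fun q => g q * g q) p = 2 * (advect v g p * g p) := by
    intro p
    rw [advect, advect, advH, advH, dX_mul (hd p) (hd p), dY_mul (hd p) (hd p),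
      dZ_mul (hd p) (hd p)]
    ring
  have hsq := integral_advect_eq_zero hv hdiv (hg.mul hg)
  rw [integral_congr_ae (ae_of_all _ hpt), integral_const_mul] at hsq
  exact (mul_eq_zero.1 hsq).resolve_left two_ne_zero

def ContinuousF (U : Fld) : Prop := Continuous U.1.1 ∧ Continuous U.1.2 ∧ Continuous U.2

theorem ContinuousF.continuous_pair {U W : Fld} (hU : ContinuousF U) (hW : ContinuousF W) :
    Continuous fun p => U.1.1 p * W.1.1 p + U.1.2 p * W.1.2 p + U.2 p * W.2 p :=
  ((hU.1.mul hW.1).add (hU.2.1.mul hW.2.1)).add (hU.2.2.mul hW.2.2)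

theorem pairF_eq_add {U W : Fld} (hU : ContinuousF U) (hW : ContinuousF W) :
    pairF U W = (∫ p in D3, U.1.1 p * W.1.1 p) + (∫ p in D3, U.1.2 p * W.1.2 p)
      + ∫ p in D3, U.2 p * W.2 p := by
  obtain ⟨hU₁, hU₂, hU₃⟩ := hU
  obtain ⟨hW₁, hW₂, hW₃⟩ := hW
  rw [pairF, integral_add ((hU₁.fun_mul hW₁).fun_add (hU₂.fun_mul hW₂)).integrableOn_D3
    (hU₃.fun_mul hW₃).integrableOn_D3,
    integral_add (hU₁.fun_mul hW₁).integrableOn_D3 (hU₂.fun_mul hW₂).integrableOn_D3]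

theorem pairF_add_left {U V W : Fld} (hU : ContinuousF U) (hV : ContinuousF V)
    (hW : ContinuousF W) : pairF (U + V) W = pairF U W + pairF V W := by
  rw [pairF, pairF, pairF, ← integral_add (hU.continuous_pair hW).integrableOn_D3
    (hV.continuous_pair hW).integrableOn_D3]
  refine integral_congr_ae (ae_of_all _ fun p => ?_)
  simp only [Prod.fst_add, Prod.snd_add, Pi.add_apply]
  ring

theorem pairF_neg_left (U W : Fld) : pairF (-U) W = -pairF U W := by
  rw [pairF, pairF, ← integral_neg]
  refine integral_congr_ae (ae_of_all _ fun p => ?_)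
  simp only [Prod.fst_neg, Prod.snd_neg, Pi.neg_apply]
  ring

theorem ContinuousF.add {U V : Fld} (hU : ContinuousF U) (hV : ContinuousF V) :
    ContinuousF (U + V) :=
  ⟨hU.1.add hV.1, hU.2.1.add hV.2.1, hU.2.2.add hV.2.2⟩

theorem ContinuousF.neg {U : Fld} (hU : ContinuousF U) : ContinuousF (-U) :=
  ⟨hU.1.neg, hU.2.1.neg, hU.2.2.neg⟩

theorem SmoothF.continuousF {U : Fld} (hU : SmoothF U) : ContinuousF U :=
  ⟨hU.1.1.continuous, hU.1.2.continuous, hU.2.continuous⟩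

theorem SmoothF.continuousF_lapF {U : Fld} (hU : SmoothF U) : ContinuousF (lapF U) :=
  ⟨hU.1.1.continuous_lap, hU.1.2.continuous_lap, hU.2.continuous_lap⟩

theorem SmoothV.continuous_advect {v : VF} (hv : SmoothV v) {g : Pt → ℝ} (hg : Smooth3 g) :
    Continuous (advect v g) :=
  ((hv.1.continuous.mul hg.dX.continuous).add (hv.2.continuous.mul hg.dY.continuous)).add
    (hv.continuous_Phi.mul hg.dZ.continuous)

theorem SmoothF.continuousF_BF {U : Fld} (hU : SmoothF U) : ContinuousF (BF U U) :=
  ⟨hU.1.continuous_advect hU.1.1, hU.1.continuous_advect hU.1.2, hU.1.continuous_advect hU.2⟩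

theorem SmoothF.continuousF_GF (fc : ℝ) {U : Fld} (hU : SmoothF U) : ContinuousF (GF fc U) :=
  ⟨(continuous_const.mul hU.1.2.continuous).sub (continuous_primZ hU.2.dX.continuous),
    (continuous_const.mul hU.1.1.continuous).sub (continuous_primZ hU.2.dY.continuous),
    hU.1.continuous_Phi⟩

theorem pairF_PEop (fc : ℝ) {U : Fld} (hU : SmoothF U) :
    pairF (PEop fc U) U = -pairF (lapF U) U + pairF (BF U U) U + pairF (GF fc U) U := by
  have hL := hU.continuousF_lapF.neg
  have hU' := hU.continuousF
  rw [show PEop fc U = -lapF U + BF U U + GF fc U from rfl,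
    pairF_add_left (hL.add hU.continuousF_BF) (hU.continuousF_GF fc) hU',
    pairF_add_left hL hU.continuousF_BF hU', pairF_neg_left]

theorem BF_self (U : Fld) : BF U U = ((advect U.1 U.1.1, advect U.1 U.1.2), advect U.1 U.2) := rfl

theorem pairF_BF_self_eq_zero {U : Fld} (hU : SmoothF U) (hdiv : DivFreeV U.1) :
    pairF (BF U U) U = 0 := by
  rw [pairF_eq_add hU.continuousF_BF hU.continuousF, BF_self]
  simp only [integral_advect_mul_self_eq_zero hU.1 hdiv hU.1.1,
    integral_advect_mul_self_eq_zero hU.1 hdiv hU.1.2,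
    integral_advect_mul_self_eq_zero hU.1 hdiv hU.2, add_zero]

theorem L2F_sq (U : Fld) : L2F U ^ 2 = ∫ p in D3, (U.1.1 p ^ 2 + U.1.2 p ^ 2 + U.2 p ^ 2) :=
  sq_sqrt (integral_nonneg fun p => by positivity)

theorem W12F_sq {U : Fld} (hU : SmoothF U) : W12F U ^ 2
    = L2F U ^ 2 + (∫ p in D3, gradSq U.1.1 p) + (∫ p in D3, gradSq U.1.2 p)
      + ∫ p in D3, gradSq U.2 p := by
  obtain ⟨⟨h₁, h₂⟩, h₃⟩ := hU
  have hL : Continuous fun p => U.1.1 p ^ 2 + U.1.2 p ^ 2 + U.2 p ^ 2 := by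
    have := h₁.continuous; have := h₂.continuous; have := h₃.continuous; fun_prop
  rw [W12F, sq_sqrt (integral_nonneg fun p => by simp only [gradSq]; positivity), L2F_sq,
    integral_add ((hL.fun_add h₁.continuous_gradSq).fun_add h₂.continuous_gradSq).integrableOn_D3
      h₃.continuous_gradSq.integrableOn_D3,
    integral_add (hL.fun_add h₁.continuous_gradSq).integrableOn_D3
      h₂.continuous_gradSq.integrableOn_D3,
    integral_add hL.integrableOn_D3 h₁.continuous_gradSq.integrableOn_D3]

theorem pairF_lapF_self {U : Fld} (hU : SmoothF U) :
    pairF (lapF U) U = L2F U ^ 2 - W12F U ^ 2 := by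
  rw [W12F_sq hU, pairF_eq_add hU.continuousF_lapF hU.continuousF]
  simp only [lapF, integral_lap_mul_self hU.1.1, integral_lap_mul_self hU.1.2,
    integral_lap_mul_self hU.2]
  ring

theorem pairF_GF_self (fc : ℝ) {U : Fld} (hU : SmoothF U) :
    pairF (GF fc U) U = -((∫ p in D3, primZ (dX U.2) p * U.1.1 p)
      + (∫ p in D3, primZ (dY U.2) p * U.1.2 p) + ∫ p in D3, primZ (divH U.1) p * U.2 p) := by
  obtain ⟨h₁, h₂, h₃⟩ := hU.continuousF
  rw [← integral_add ((continuous_primZ hU.2.dX.continuous).fun_mul h₁).integrableOn_D3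
      ((continuous_primZ hU.2.dY.continuous).fun_mul h₂).integrableOn_D3,
    ← integral_add (((continuous_primZ hU.2.dX.continuous).fun_mul h₁).fun_add
      ((continuous_primZ hU.2.dY.continuous).fun_mul h₂)).integrableOn_D3
      ((continuous_primZ hU.1.continuous_divH).fun_mul h₃).integrableOn_D3,
    ← integral_neg]
  refine integral_congr_ae (ae_of_all _ fun p => ?_)
  simp only [GF, Phi, primZ]
  ring

theorem L2_le_L2F {U : Fld} (hU : SmoothF U) :
    L2 U.1.1 ≤ L2F U ∧ L2 U.1.2 ≤ L2F U ∧ L2 U.2 ≤ L2F U := by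
  obtain ⟨h₁, h₂, h₃⟩ := hU.continuousF
  have hL : Continuous fun p => U.1.1 p ^ 2 + U.1.2 p ^ 2 + U.2 p ^ 2 := by fun_prop
  refine ⟨L2_le_sqrt_integral h₁ hL fun p => ?_, L2_le_sqrt_integral h₂ hL fun p => ?_,
    L2_le_sqrt_integral h₃ hL fun p => ?_⟩ <;>
  nlinarith [sq_nonneg (U.1.1 p), sq_nonneg (U.1.2 p), sq_nonneg (U.2 p)]

theorem L2_le_W12F {U : Fld} (hU : SmoothF U) :
    L2 (dX U.2) ≤ W12F U ∧ L2 (dY U.2) ≤ W12F U ∧ L2 (divH U.1) ≤ 2 * W12F U := by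
  obtain ⟨⟨h₁, h₂⟩, h₃⟩ := hU
  have := h₁.continuous; have := h₂.continuous; have := h₃.continuous
  have := h₁.continuous_gradSq; have := h₂.continuous_gradSq; have := h₃.continuous_gradSq
  have hW : Continuous fun p => U.1.1 p ^ 2 + U.1.2 p ^ 2 + U.2 p ^ 2
      + gradSq U.1.1 p + gradSq U.1.2 p + gradSq U.2 p := by fun_prop
  refine ⟨L2_le_sqrt_integral h₃.dX.continuous hW fun p => ?_,
    L2_le_sqrt_integral h₃.dY.continuous hW fun p => ?_,
    L2_le_mul_sqrt_integral (SmoothV.continuous_divH ⟨h₁, h₂⟩) hW zero_le_two fun p => ?_⟩ <;>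
  simp only [gradSq, divH] <;>
  nlinarith [sq_nonneg (U.1.1 p), sq_nonneg (U.1.2 p), sq_nonneg (U.2 p),
    sq_nonneg (dX U.1.1 p), sq_nonneg (dY U.1.1 p), sq_nonneg (dZ U.1.1 p),
    sq_nonneg (dX U.1.2 p), sq_nonneg (dY U.1.2 p), sq_nonneg (dZ U.1.2 p),
    sq_nonneg (dX U.2 p), sq_nonneg (dY U.2 p), sq_nonneg (dZ U.2 p),
    sq_nonneg (dX U.1.1 p - dY U.1.2 p)]

theorem abs_pairF_GF_le (fc : ℝ) {U : Fld} (hU : SmoothF U) :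
    |pairF (GF fc U) U| ≤ 8 * L2F U * W12F U := by
  obtain ⟨h₁, h₂, h₃⟩ := hU.continuousF
  obtain ⟨hv₁, hv₂, hT⟩ := L2_le_L2F hU
  obtain ⟨hTx, hTy, hdiv⟩ := L2_le_W12F hU
  have hTx' : L2 (primZ (dX U.2)) ≤ 2 * W12F U := by
    linarith [L2_primZ_le hU.2.dX.continuous]
  have hTy' : L2 (primZ (dY U.2)) ≤ 2 * W12F U := by
    linarith [L2_primZ_le hU.2.dY.continuous]
  have hdiv' : L2 (primZ (divH U.1)) ≤ 4 * W12F U := by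
    linarith [L2_primZ_le hU.1.continuous_divH]
  have hW : 0 ≤ W12F U := sqrt_nonneg _
  rw [pairF_GF_self fc hU, abs_neg]
  calc _ ≤ |∫ p in D3, primZ (dX U.2) p * U.1.1 p| + |∫ p in D3, primZ (dY U.2) p * U.1.2 p|
        + |∫ p in D3, primZ (divH U.1) p * U.2 p| :=
        (abs_add_le _ _).trans (add_le_add_left (abs_add_le _ _) _)
    _ ≤ L2 (primZ (dX U.2)) * L2 U.1.1 + L2 (primZ (dY U.2)) * L2 U.1.2
        + L2 (primZ (divH U.1)) * L2 U.2 := by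
      gcongr
      · exact abs_integral_mul_le_L2_mul_L2 (continuous_primZ hU.2.dX.continuous) h₁
      · exact abs_integral_mul_le_L2_mul_L2 (continuous_primZ hU.2.dY.continuous) h₂
      · exact abs_integral_mul_le_L2_mul_L2 (continuous_primZ hU.1.continuous_divH) h₃
    _ ≤ (2 * W12F U) * L2F U + (2 * W12F U) * L2F U + (4 * W12F U) * L2F U := by
      gcongr <;> first | assumption | exact sqrt_nonneg _
    _ = 8 * L2F U * W12F U := by ring

/-- coercivity
`⟨−ΔU + B(U,U) + G(U), U⟩ ≥ ½‖U‖² − λ₁(1 + |U|²)`, together with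
`(B(U,U), U) = 0` and `|(G(U), U)| ≤ C |U| ‖U‖`. -/
theorem coercivity_condition (fc : ℝ) :
    ∃ lam₁ : ℝ, 0 ≤ lam₁ ∧ ∃ C : ℝ,
      ∀ U : Fld, SmoothF U → MeanZeroF U → DivFreeV U.1 →
        (1 / 2) * (W12F U) ^ 2 - lam₁ * (1 + (L2F U) ^ 2) ≤ pairF (PEop fc U) U ∧
        pairF (BF U U) U = 0 ∧
        |pairF (GF fc U) U| ≤ C * L2F U * W12F U := by
  refine ⟨33, by norm_num, 8, fun U hU _ hdiv => ?_⟩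
  have hB := pairF_BF_self_eq_zero hU hdiv
  have hG := abs_pairF_GF_le fc hU
  refine ⟨?_, hB, hG⟩
  rw [pairF_PEop fc hU, pairF_lapF_self hU, hB]
  nlinarith [(abs_le.1 hG).1, sq_nonneg (W12F U - 8 * L2F U)]

end
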